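/- arXiv:2210.02146 — 4 statements merged into one kernel-verified Lean document; each statement's English description precedes it below -/
import Mathlib

section
/- Let C be a centralic category. If f : X → Y and g : X' → Y are both central morphisms, then any cooperator ρ : X × X' → Y for f and g is itself a central morphism. -/
open CategoryTheory CategoryTheory.Limits

universe v u

/-- A pointed category with binary products is *centralic*. -/
def Centralic (C : Type u) [Category.{v} C] [HasZeroObject C] [HasZeroMorphisms C]
    [HasBinaryProducts C] : Prop :=
  ∀ ⦃X Y Z S : C⦄ (f : X ⨯ Y ⟶ Z) (x x' : S ⟶ X) (y : S ⟶ Y),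
    prod.lift x 0 ≫ f = prod.lift x' 0 ≫ f →
    prod.lift x y ≫ f = prod.lift x' y ≫ f

/-- `ρ : A ⨯ B ⟶ X` is a cooperator for `f : A ⟶ X` and `g : B ⟶ X`. -/
def IsCooperator {C : Type u} [Category.{v} C] [HasZeroObject C] [HasZeroMorphisms C]
    [HasBinaryProducts C] {A B X : C} (f : A ⟶ X) (g : B ⟶ X) (ρ : A ⨯ B ⟶ X) : Prop :=
  prod.lift (𝟙 A) 0 ≫ ρ = f ∧ prod.lift 0 (𝟙 B) ≫ ρ = g

/-- Two morphisms with common codomain commute if they admit a cooperator. -/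
def Commutes {C : Type u} [Category.{v} C] [HasZeroObject C] [HasZeroMorphisms C]
    [HasBinaryProducts C] {A B X : C} (f : A ⟶ X) (g : B ⟶ X) : Prop :=
  ∃ ρ : A ⨯ B ⟶ X, IsCooperator f g ρ

/-- A morphism `f : A ⟶ B` is central if it commutes with `𝟙 B`. -/
def Central {C : Type u} [Category.{v} C] [HasZeroObject C] [HasZeroMorphisms C]
    [HasBinaryProducts C] {A B : C} (f : A ⟶ B) : Prop :=
  Commutes f (𝟙 B)

/-!
Let `φ` and `ψ` be cooperators of `f` and of `g` with `𝟙 Y`. Centrality applied to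
`((b, b'), a) ↦ ψ (b, ρ (a, b'))` at the points `((b, 0), a)` and `((0, b), a)` gives
`ρ (a, b) = ψ (b, f a)`, and then `((a, b), y) ↦ ψ (b, φ (a, y))` is a cooperator of `ρ` and `𝟙 Y`.
-/

section

variable {C : Type u} [Category.{v} C] [HasZeroObject C] [HasZeroMorphisms C]
  [HasBinaryProducts C]

namespace IsCooperator

variable {A B X S : C} {f : A ⟶ X} {g : B ⟶ X} {ρ : A ⨯ B ⟶ X}

lemma lift_zero_comp (hρ : IsCooperator f g ρ) (a : S ⟶ A) :
    prod.lift a (0 : S ⟶ B) ≫ ρ = a ≫ f := by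
  rw [← hρ.1, ← Category.assoc, prod.comp_lift, Category.comp_id, comp_zero]

lemma zero_lift_comp (hρ : IsCooperator f g ρ) (b : S ⟶ B) :
    prod.lift (0 : S ⟶ A) b ≫ ρ = b ≫ g := by
  rw [← hρ.2, ← Category.assoc, prod.comp_lift, Category.comp_id, comp_zero]

end IsCooperator

lemma Centralic.cooperator_eq_lift_snd_fst_comp (hC : Centralic C) {X X' Y : C}
    {f : X ⟶ Y} {g : X' ⟶ Y} {ψ : X' ⨯ Y ⟶ Y} (hψ : IsCooperator g (𝟙 Y) ψ)
    {ρ : X ⨯ X' ⟶ Y} (hρ : IsCooperator f g ρ) :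
    ρ = prod.lift prod.snd (prod.fst ≫ f) ≫ ψ := by
  -- `((b, b'), a) ↦ ψ (b, ρ (a, b'))` takes the value `g b` at `((b, 0), 0)` and `((0, b), 0)`.
  have key := hC (prod.lift (prod.fst ≫ prod.fst)
      (prod.lift prod.snd (prod.fst ≫ prod.snd) ≫ ρ) ≫ ψ)
    (prod.lift prod.snd 0) (prod.lift 0 prod.snd) (prod.fst : X ⨯ X' ⟶ X) (by
      simp only [← Category.assoc, prod.comp_lift, prod.lift_fst, prod.lift_snd]
      rw [hρ.lift_zero_comp, hρ.zero_lift_comp, zero_comp, hψ.lift_zero_comp, hψ.zero_lift_comp,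
        Category.comp_id])
  simp only [← Category.assoc, prod.comp_lift, prod.lift_fst, prod.lift_snd,
    prod.lift_fst_snd] at key
  rwa [hρ.lift_zero_comp, hψ.zero_lift_comp, Category.comp_id, Category.id_comp, eq_comm] at key

lemma Central.lift_snd_fst_comp {X X' Y : C} {f : X ⟶ Y} (hf : Central f) {ψ : X' ⨯ Y ⟶ Y}
    (hψ : prod.lift 0 (𝟙 Y) ≫ ψ = 𝟙 Y) :
    Central (prod.lift prod.snd (prod.fst ≫ f) ≫ ψ) := by
  obtain ⟨φ, hφ⟩ := hf
  refine ⟨prod.lift (prod.fst ≫ prod.snd) (prod.lift (prod.fst ≫ prod.fst) prod.snd ≫ φ) ≫ ψ,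
    ?_, ?_⟩
  · simp only [← Category.assoc, prod.comp_lift, prod.lift_fst, prod.lift_snd, Category.id_comp]
    rw [hφ.lift_zero_comp]
  · simp only [← Category.assoc, prod.comp_lift, prod.lift_fst, prod.lift_snd, zero_comp]
    rw [hφ.zero_lift_comp, Category.id_comp, hψ]

end

/-- A cooperator of two central morphisms is central. -/
theorem stmt6 (C : Type u) [Category.{v} C] [HasZeroObject C] [HasZeroMorphisms C]
    [HasBinaryProducts C] (hC : Centralic C)
    {X X' Y : C} (f : X ⟶ Y) (g : X' ⟶ Y) (hf : Central f) (hg : Central g)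
    (ρ : X ⨯ X' ⟶ Y) (hρ : IsCooperator f g ρ) :
    Central ρ := by
  obtain ⟨ψ, hψ⟩ := hg
  rw [hC.cooperator_eq_lift_snd_fst_comp hψ hρ]
  exact hf.lift_snd_fst_comp hψ.2
end

section
/- Let C be a centralic category. For any two central morphisms f, g : X → Y with cooperators ρ_f, ρ_g : X × Y → Y for f with 1_Y and g with 1_Y respectively, one has ρ_f ∘ ⟨1_X, g⟩ = ρ_g ∘ ⟨1_X, f⟩; that is, the addition f ⋆ g := ρ_f ∘ ⟨1_X, g⟩ on central morphisms from X to Y is commutative. -/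
/-!
Given cooperators `ρf` of `f` with `𝟙 Y` and `ρg` of `g` with `𝟙 Y`, the morphisms `ρf` and `ρg`
behave like commuting actions on `Y`: `ρf (a, ρg (b, c)) = ρg (b, ρf (a, c))`. To see this, apply
the centralic condition to `τ ((a, c), b) := ρf (a, ρg (b, c))` at the points `(a, c)` and
`(0, ρf (a, c))`, on which `τ (-, 0)` agrees. Taking `c = 0` and `a = b = 𝟙 X` gives
`ρf (1, g) = ρg (1, f)`.
-/

open CategoryTheory CategoryTheory.Limits

universe v u

section

variable {C : Type u} [Category.{v} C] [HasZeroObject C] [HasZeroMorphisms C]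
  [HasBinaryProducts C]

namespace IsCooperator

variable {A B X S : C} {f : A ⟶ X} {g : B ⟶ X} {ρ : A ⨯ B ⟶ X}

lemma lift_zero_right (hρ : IsCooperator f g ρ) (a : S ⟶ A) :
    prod.lift a 0 ≫ ρ = a ≫ f := by
  rw [← hρ.1, ← Category.assoc, prod.comp_lift, Category.comp_id, comp_zero]

lemma lift_zero_left (hρ : IsCooperator f g ρ) (b : S ⟶ B) :
    prod.lift 0 b ≫ ρ = b ≫ g := by
  rw [← hρ.2, ← Category.assoc, prod.comp_lift, Category.comp_id, comp_zero]

end IsCooperator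

lemma Centralic.cooperator_comp_comm (hC : Centralic C) {A B Y S : C} {f : A ⟶ Y} {g : B ⟶ Y}
    {ρf : A ⨯ Y ⟶ Y} {ρg : B ⨯ Y ⟶ Y}
    (hρf : IsCooperator f (𝟙 Y) ρf) (hρg : IsCooperator g (𝟙 Y) ρg)
    (a : S ⟶ A) (b : S ⟶ B) (c : S ⟶ Y) :
    prod.lift a (prod.lift b c ≫ ρg) ≫ ρf = prod.lift b (prod.lift a c ≫ ρf) ≫ ρg := by
  let τ : (A ⨯ Y) ⨯ B ⟶ Y :=
    prod.lift (prod.fst ≫ prod.fst) (prod.lift prod.snd (prod.fst ≫ prod.snd) ≫ ρg) ≫ ρf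
  have τ_eval : ∀ (a : S ⟶ A) (c : S ⟶ Y) (b : S ⟶ B),
      prod.lift (prod.lift a c) b ≫ τ = prod.lift a (prod.lift b c ≫ ρg) ≫ ρf := by
    intro a c b
    simp only [τ, prod.comp_lift_assoc, prod.lift_fst_assoc, prod.lift_fst,
      prod.lift_snd]
  have agree_at_zero : prod.lift (prod.lift a c) 0 ≫ τ =
      prod.lift (prod.lift 0 (prod.lift a c ≫ ρf)) 0 ≫ τ := by
    simp only [τ_eval, hρf.lift_zero_left, hρg.lift_zero_left, Category.comp_id]
  simpa only [τ_eval, hρf.lift_zero_left, Category.comp_id] using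
    hC τ (prod.lift a c) (prod.lift 0 (prod.lift a c ≫ ρf)) b agree_at_zero

end

/-- The addition `f ⋆ g := ρ_f ∘ ⟨1_X, g⟩` on central morphisms is commutative. -/
theorem stmt8 (C : Type u) [Category.{v} C] [HasZeroObject C] [HasZeroMorphisms C]
    [HasBinaryProducts C] (hC : Centralic C)
    {X Y : C} (f g : X ⟶ Y) (ρf ρg : X ⨯ Y ⟶ Y)
    (hρf : IsCooperator f (𝟙 Y) ρf) (hρg : IsCooperator g (𝟙 Y) ρg) :
    prod.lift (𝟙 X) g ≫ ρf = prod.lift (𝟙 X) f ≫ ρg := by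
  simpa only [hρf.lift_zero_right, hρg.lift_zero_right, Category.id_comp] using
    hC.cooperator_comp_comm hρf hρg (𝟙 X) (𝟙 X) 0
end

section
/- Let C be a finitely complete centralic category in which regular epimorphisms are stable under binary products. For any two regular epimorphisms q₁ : A → X and q₂ : B → X with common codomain, the object X is commutative if and only if q₁ commutes with q₂. -/
open CategoryTheory CategoryTheory.Limits

universe v u

/-- `q : X ⟶ Q` is a coequalizer of `u v : A ⟶ X`. -/
def IsCoequalizerDiagram {C : Type u} [Category.{v} C] {A X Q : C}
    (u v : A ⟶ X) (q : X ⟶ Q) : Prop :=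
  u ≫ q = v ≫ q ∧ ∀ ⦃Z : C⦄ (h : X ⟶ Z), u ≫ h = v ≫ h → ∃! t : Q ⟶ Z, q ≫ t = h

/-- A morphism is a regular epimorphism if it is the coequalizer of some pair. -/
def IsRegularEpimorphism {C : Type u} [Category.{v} C] {X Q : C} (q : X ⟶ Q) : Prop :=
  ∃ (A : C) (u v : A ⟶ X), IsCoequalizerDiagram u v q

/-- Regular epimorphisms are stable under binary products. -/
def RegularEpisStableUnderProducts (C : Type u) [Category.{v} C] [HasBinaryProducts C] : Prop :=
  ∀ ⦃X₁ Q₁ X₂ Q₂ : C⦄ (q₁ : X₁ ⟶ Q₁) (q₂ : X₂ ⟶ Q₂),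
    IsRegularEpimorphism q₁ → IsRegularEpimorphism q₂ →
    IsRegularEpimorphism (prod.map q₁ q₂)

/-!
If `𝟙 X` has a cooperator `ρ`, then `prod.map q₁ q₂ ≫ ρ` is a cooperator for `q₁` and `q₂`.
Conversely, given a cooperator `φ` of `q₁` and `q₂`, centrality lets us change each argument of
`φ` separately within a fibre of `q₁` (resp. `q₂`), so `φ` coequalizes any pair coequalized by
`prod.map q₁ q₂`. As `prod.map q₁ q₂` is a regular epimorphism, `φ` factors through it, and the
factorization is a cooperator for `𝟙 X` because `q₁` and `q₂` are epimorphisms.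
-/

section

variable {C : Type u} [Category.{v} C]

theorem IsRegularEpimorphism.epi {X Q : C} {q : X ⟶ Q} (hq : IsRegularEpimorphism q) : Epi q := by
  obtain ⟨A, u, v, huv, hcoeq⟩ := hq
  refine ⟨fun h h' e => ?_⟩
  obtain ⟨t, -, huniq⟩ := hcoeq (q ≫ h) (by rw [← Category.assoc, huv, Category.assoc])
  rw [huniq h rfl, huniq h' e.symm]

variable [HasZeroObject C] [HasZeroMorphisms C] [HasBinaryProducts C]

theorem Centralic.lift_comp_eq_of_right (hC : Centralic C) {X Y Z S : C} (f : X ⨯ Y ⟶ Z)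
    (x : S ⟶ X) (y y' : S ⟶ Y) (h : prod.lift 0 y ≫ f = prod.lift 0 y' ≫ f) :
    prod.lift x y ≫ f = prod.lift x y' ≫ f := by
  have swap : ∀ (x : S ⟶ X) (y : S ⟶ Y),
      prod.lift y x ≫ prod.lift prod.snd prod.fst ≫ f = prod.lift x y ≫ f := by
    intro x y
    rw [← Category.assoc, prod.comp_lift, prod.lift_fst, prod.lift_snd]
  rw [← swap, ← swap]
  exact hC _ y y' x (by rw [swap, swap, h])

section Cooperator

variable {A B X : C} {f : A ⟶ X} {g : B ⟶ X} {ρ : A ⨯ B ⟶ X}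

theorem IsCooperator.lift_comp_eq (hC : Centralic C) (hρ : IsCooperator f g ρ) {S : C}
    {a a' : S ⟶ A} {b b' : S ⟶ B} (ha : a ≫ f = a' ≫ f) (hb : b ≫ g = b' ≫ g) :
    prod.lift a b ≫ ρ = prod.lift a' b' ≫ ρ := by
  have hfst : ∀ a : S ⟶ A, prod.lift a (0 : S ⟶ B) ≫ ρ = a ≫ f := by
    intro a
    rw [← hρ.1, ← Category.assoc, prod.comp_lift, Category.comp_id, comp_zero]
  have hsnd : ∀ b : S ⟶ B, prod.lift (0 : S ⟶ A) b ≫ ρ = b ≫ g := by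
    intro b
    rw [← hρ.2, ← Category.assoc, prod.comp_lift, Category.comp_id, comp_zero]
  calc prod.lift a b ≫ ρ = prod.lift a' b ≫ ρ := hC ρ a a' b (by rw [hfst, hfst, ha])
    _ = prod.lift a' b' ≫ ρ := hC.lift_comp_eq_of_right ρ a' b b' (by rw [hsnd, hsnd, hb])

theorem IsCooperator.comp_eq_of_comp_prodMap_eq (hC : Centralic C) (hρ : IsCooperator f g ρ)
    {S : C} {u v : S ⟶ A ⨯ B} (h : u ≫ prod.map f g = v ≫ prod.map f g) : u ≫ ρ = v ≫ ρ := by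
  have hfst := congrArg (· ≫ prod.fst) h
  have hsnd := congrArg (· ≫ prod.snd) h
  simp only [Category.assoc, prod.map_fst, prod.map_snd] at hfst hsnd
  have hlift : ∀ w : S ⟶ A ⨯ B, prod.lift (w ≫ prod.fst) (w ≫ prod.snd) = w := fun w =>
    prod.hom_ext (prod.lift_fst _ _) (prod.lift_snd _ _)
  rw [← hlift u, ← hlift v]
  exact hρ.lift_comp_eq hC (by simpa only [Category.assoc]) (by simpa only [Category.assoc])

theorem isCooperator_prodMap_comp_iff {A' B' : C} (a : A' ⟶ A) (b : B' ⟶ B) [Epi a] [Epi b]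
    (t : A ⨯ B ⟶ X) :
    IsCooperator (a ≫ f) (b ≫ g) (prod.map a b ≫ t) ↔ IsCooperator f g t := by
  have hfst : prod.lift (𝟙 A') (0 : A' ⟶ B') ≫ prod.map a b = a ≫ prod.lift (𝟙 A) 0 := by
    ext <;> simp
  have hsnd : prod.lift (0 : B' ⟶ A') (𝟙 B') ≫ prod.map a b = b ≫ prod.lift 0 (𝟙 B) := by
    ext <;> simp
  simp only [IsCooperator, ← Category.assoc, hfst, hsnd]
  simp only [Category.assoc, cancel_epi]

end Cooperator

end

/-- An object `X` is commutative iff any two regular epis onto `X` commute. -/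
theorem stmt12 (C : Type u) [Category.{v} C] [HasZeroObject C] [HasZeroMorphisms C]
    [HasFiniteLimits C] (hC : Centralic C)
    (hstab : RegularEpisStableUnderProducts C)
    {A B X : C} (q₁ : A ⟶ X) (q₂ : B ⟶ X)
    (hq₁ : IsRegularEpimorphism q₁) (hq₂ : IsRegularEpimorphism q₂) :
    Central (𝟙 X) ↔ Commutes q₁ q₂ := by
  have := hq₁.epi
  have := hq₂.epi
  have hcoop (t : X ⨯ X ⟶ X) :
      IsCooperator q₁ q₂ (prod.map q₁ q₂ ≫ t) ↔ IsCooperator (𝟙 X) (𝟙 X) t := by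
    simpa only [Category.comp_id] using
      isCooperator_prodMap_comp_iff (f := 𝟙 X) (g := 𝟙 X) q₁ q₂ t
  constructor
  · rintro ⟨ρ, hρ⟩
    exact ⟨_, (hcoop ρ).2 hρ⟩
  · rintro ⟨φ, hφ⟩
    obtain ⟨E, u, v, huv, hdesc⟩ := hstab q₁ q₂ hq₁ hq₂
    obtain ⟨t, rfl, -⟩ := hdesc φ (hφ.comp_eq_of_comp_prodMap_eq hC huv)
    exact ⟨t, (hcoop t).1 hφ⟩
end

section
/- Let C be a finitely complete centralic category in which regular epimorphisms are stable under binary products. The commutative objects are closed under regular quotients: for any regular epimorphism q : X → Y, if X is commutative then so is Y. -/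
/-!
Let `ρ : X ⨯ X ⟶ X` be a cooperator of `𝟙 X` with itself and `q : X ⟶ Y` a regular
epimorphism. Since `q ⨯ q` is again a regular epimorphism, it suffices that `ρ ≫ q` coequalizes
the kernel pair of `q ⨯ q`; the induced map `Y ⨯ Y ⟶ Y` is then a cooperator of `𝟙 Y` with
itself, because `q` is epic. Centrality lets us change the two coordinates of a generalized
element of `X ⨯ X` one at a time, and on each axis `ρ ≫ q` restricts to `q`, which does not see
the change.
-/

open CategoryTheory CategoryTheory.Limits

universe v u

variable {C : Type u} [Category.{v} C]

variable [HasZeroObject C] [HasZeroMorphisms C] [HasBinaryProducts C]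

theorem IsCooperator.lift_zero_comp_s15 {A B X S : C} {f : A ⟶ X} {g : B ⟶ X} {ρ : A ⨯ B ⟶ X}
    (hρ : IsCooperator f g ρ) (a : S ⟶ A) : prod.lift a 0 ≫ ρ = a ≫ f := by
  rw [← hρ.1, ← Category.assoc, prod.comp_lift, Category.comp_id, comp_zero]

theorem IsCooperator.zero_lift_comp_s15 {A B X S : C} {f : A ⟶ X} {g : B ⟶ X} {ρ : A ⨯ B ⟶ X}
    (hρ : IsCooperator f g ρ) (b : S ⟶ B) : prod.lift 0 b ≫ ρ = b ≫ g := by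
  rw [← hρ.2, ← Category.assoc, prod.comp_lift, Category.comp_id, comp_zero]

namespace Centralic

theorem lift_comp_eq_of_right_s15 (hC : Centralic C) {X Y Z S : C} (f : X ⨯ Y ⟶ Z) (x : S ⟶ X)
    (y y' : S ⟶ Y) (h : prod.lift 0 y ≫ f = prod.lift 0 y' ≫ f) :
    prod.lift x y ≫ f = prod.lift x y' ≫ f := by
  have swap : ∀ (b : S ⟶ Y) (a : S ⟶ X),
      prod.lift b a ≫ prod.lift prod.snd prod.fst ≫ f = prod.lift a b ≫ f := by
    intro b a
    simp only [prod.lift_snd, prod.lift_fst, prod.comp_lift_assoc]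
  simpa only [swap] using hC (prod.lift prod.snd prod.fst ≫ f) y y' x (by simpa only [swap])

theorem lift_comp_eq (hC : Centralic C) {X Y Z S : C} (f : X ⨯ Y ⟶ Z) {x x' : S ⟶ X}
    {y y' : S ⟶ Y} (hx : prod.lift x 0 ≫ f = prod.lift x' 0 ≫ f)
    (hy : prod.lift 0 y ≫ f = prod.lift 0 y' ≫ f) :
    prod.lift x y ≫ f = prod.lift x' y' ≫ f :=
  (hC f x x' y hx).trans (hC.lift_comp_eq_of_right_s15 f x' y y' hy)

theorem commutes_of_isRegularEpimorphism (hC : Centralic C)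
    (hstab : RegularEpisStableUnderProducts C)
    {A B A' B' X Z : C} {q₁ : A ⟶ A'} {q₂ : B ⟶ B'}
    (hq₁ : IsRegularEpimorphism q₁) (hq₂ : IsRegularEpimorphism q₂)
    {f : A ⟶ X} {g : B ⟶ X} (hfg : Commutes f g) (h : X ⟶ Z) {f' : A' ⟶ Z} {g' : B' ⟶ Z}
    (hf : q₁ ≫ f' = f ≫ h) (hg : q₂ ≫ g' = g ≫ h) : Commutes f' g' := by
  obtain ⟨ρ, hρ⟩ := hfg
  have := hq₁.epi
  have := hq₂.epi
  obtain ⟨K, u, v, huv, hcoeq⟩ := hstab q₁ q₂ hq₁ hq₂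
  have hfst : u ≫ prod.fst ≫ q₁ = v ≫ prod.fst ≫ q₁ := by
    simpa only [Category.assoc, prod.map_fst] using huv =≫ prod.fst
  have hsnd : u ≫ prod.snd ≫ q₂ = v ≫ prod.snd ≫ q₂ := by
    simpa only [Category.assoc, prod.map_snd] using huv =≫ prod.snd
  have hρuv : u ≫ ρ ≫ h = v ≫ ρ ≫ h := by
    have hsplit (w : K ⟶ A ⨯ B) : w = prod.lift (w ≫ prod.fst) (w ≫ prod.snd) := by
      rw [← prod.comp_lift, prod.lift_fst_snd, Category.comp_id]
    rw [hsplit u, hsplit v]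
    apply hC.lift_comp_eq
    · simp only [reassoc_of% hρ.lift_zero_comp_s15, Category.assoc, ← hf, reassoc_of% hfst]
    · simp only [reassoc_of% hρ.zero_lift_comp_s15, Category.assoc, ← hg, reassoc_of% hsnd]
  obtain ⟨t, ht, -⟩ := hcoeq (ρ ≫ h) hρuv
  refine ⟨t, ?_, ?_⟩
  · have hlift : q₁ ≫ prod.lift (𝟙 A') 0 = prod.lift (𝟙 A) 0 ≫ prod.map q₁ q₂ := by
      simp
    rw [← cancel_epi q₁, reassoc_of% hlift, ht, reassoc_of% hρ.1, hf]
  · have hlift : q₂ ≫ prod.lift 0 (𝟙 B') = prod.lift 0 (𝟙 B) ≫ prod.map q₁ q₂ := by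
      simp
    rw [← cancel_epi q₂, reassoc_of% hlift, ht, reassoc_of% hρ.2, hg]

end Centralic

/-- Commutative objects are closed under regular quotients. -/
theorem stmt15 (C : Type u) [Category.{v} C] [HasZeroObject C] [HasZeroMorphisms C]
    [HasFiniteLimits C] (hC : Centralic C)
    (hstab : RegularEpisStableUnderProducts C)
    {X Y : C} (q : X ⟶ Y) (hq : IsRegularEpimorphism q)
    (hX : Central (𝟙 X)) : Central (𝟙 Y) :=
  hC.commutes_of_isRegularEpimorphism hstab hq hq hX q (by simp) (by simp)
end
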